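/- arXiv:math/0505288 — 3 statements merged into one kernel-verified Lean document; each statement's English description precedes it below -/
import Mathlib

section
/- Let F be Thompson's group, presented as the presented group on two generators x₀, x₁ with relators x₁⁻¹x₂x₁x₃⁻¹ and x₁⁻¹x₃x₁x₄⁻¹, where xₙ := x₀^{-(n-1)} x₁ x₀^{n-1}, and set h := x₁x₂x₁⁻² with x₂ = x₀⁻¹x₁x₀. Then for all integers i and j, the elements x₀⁻ⁱ h x₀ⁱ and x₀⁻ʲ h x₀ʲ commute in F. -/
/-- The elements `xₙ` of the free group on two generators:
`x₀`, and `xₙ = x₀^{-(n-1)} x₁ x₀^{n-1}` for `n ≥ 1`. -/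
def xgen : ℕ → FreeGroup (Fin 2)
  | 0 => FreeGroup.of 0
  | n + 1 => (FreeGroup.of 0) ^ (-(n : ℤ)) * FreeGroup.of 1 * (FreeGroup.of 0) ^ (n : ℤ)

/-- The two defining relators of Thompson's group `F`. -/
def thompsonRels : Set (FreeGroup (Fin 2)) :=
  {(xgen 1)⁻¹ * xgen 2 * xgen 1 * (xgen 3)⁻¹,
   (xgen 1)⁻¹ * xgen 3 * xgen 1 * (xgen 4)⁻¹}

/-- Thompson's group `F` as a presented group. -/
abbrev ThompsonF := PresentedGroup thompsonRels

/-- The generator `x₀` of Thompson's group `F`. -/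
def xF₀ : ThompsonF := PresentedGroup.of 0

/-- The generator `x₁` of Thompson's group `F`. -/
def xF₁ : ThompsonF := PresentedGroup.of 1

/-- The element `h = x₁ x₂ x₁⁻²` of Thompson's group `F`, where `x₂ = x₀⁻¹x₁x₀`. -/
def hF : ThompsonF := xF₁ * (xF₀⁻¹ * xF₁ * xF₀) * xF₁⁻¹ * xF₁⁻¹

/-!
Write `xₙ₊₁ = x₀⁻ⁿ x₁ x₀ⁿ` for all integers `n`. Conjugating the two relators by powers of `x₀`
gives `xₖ⁻¹ xₖ₊₁ xₖ = xₖ₊₂` and `xₖ⁻¹ xₖ₊₂ xₖ = xₖ₊₃`, and an induction on `n` upgrades them to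
`xₖ⁻¹ xₙ xₖ = xₙ₊₁` for all `k < n`. Now `x₀⁻ᵏ h x₀ᵏ = xₖ₊₁ xₖ₊₂ xₖ₊₁⁻²`, and for `k < n`
conjugating `xₙ₊₁` by the letters of this word moves its index up twice and back down twice; so for
`k < m` the element `x₀⁻ᵏ h x₀ᵏ` commutes with `xₘ₊₁` and `xₘ₊₂`, hence with `x₀⁻ᵐ h x₀ᵐ`.
-/

section GroupRelations

variable {G : Type*} [Group G] (x y : G)

def conjZPow (n : ℤ) : G := x ^ (-n) * y * x ^ n

/-- The defining relations of Thompson's group `F` for `xₙ₊₁ = conjZPow x y n`. -/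
structure ThompsonRelations : Prop where
  rel₁ : (conjZPow x y 0)⁻¹ * conjZPow x y 1 * conjZPow x y 0 = conjZPow x y 2
  rel₂ : (conjZPow x y 0)⁻¹ * conjZPow x y 2 * conjZPow x y 0 = conjZPow x y 3

variable {x y}

theorem conj_zpow_conjZPow (k n : ℤ) :
    MulAut.conj (x ^ (-k)) (conjZPow x y n) = conjZPow x y (k + n) := by
  simp only [MulAut.conj_apply, conjZPow]
  group

theorem inv_mul_mul_conjZPow_add {m n : ℤ}
    (h : (conjZPow x y 0)⁻¹ * conjZPow x y m * conjZPow x y 0 = conjZPow x y n)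
    {k m' n' : ℤ} (hm : m' = k + m) (hn : n' = k + n) :
    (conjZPow x y k)⁻¹ * conjZPow x y m' * conjZPow x y k = conjZPow x y n' := by
  subst hm hn
  simpa only [map_mul, map_inv, conj_zpow_conjZPow, add_zero] using
    congrArg (MulAut.conj (x ^ (-k))) h

theorem semiconjBy_of_inv_mul_mul_eq {g a b : G} (h : g⁻¹ * b * g = a) : SemiconjBy g a b := by
  subst h
  simp [SemiconjBy, mul_assoc]

theorem ThompsonRelations.semiconjBy (h : ThompsonRelations x y) {k n : ℤ} (hkn : k < n) :
    SemiconjBy (conjZPow x y k) (conjZPow x y (n + 1)) (conjZPow x y n) := by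
  have rel (k : ℤ) : (conjZPow x y k)⁻¹ * conjZPow x y (k + 1) * conjZPow x y k =
      conjZPow x y (k + 1 + 1) :=
    inv_mul_mul_conjZPow_add h.rel₁ rfl (by ring)
  suffices ∀ n, k + 1 ≤ n →
      SemiconjBy (conjZPow x y k) (conjZPow x y (n + 1)) (conjZPow x y n) ∧
      SemiconjBy (conjZPow x y k) (conjZPow x y (n + 1 + 1)) (conjZPow x y (n + 1)) from
    (this n hkn).1
  refine Int.leInduction ⟨semiconjBy_of_inv_mul_mul_eq (rel k), semiconjBy_of_inv_mul_mul_eq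
    (inv_mul_mul_conjZPow_add h.rel₂ (by ring) (by ring))⟩ fun n _ ⟨h₁, h₂⟩ => ⟨h₂, ?_⟩
  -- `xₙ₊₃ = xₙ₊₁⁻¹ xₙ₊₂ xₙ₊₁` and `xₙ₊₂ = xₙ⁻¹ xₙ₊₁ xₙ`, so the two previous steps propagate.
  have := (h₁.inv_right.mul_right h₂).mul_right h₁
  rwa [rel n, rel (n + 1)] at this

variable (x y) in
def thompsonH : G := y * (x⁻¹ * y * x) * y⁻¹ * y⁻¹

theorem conjZPow_thompsonH (k : ℤ) :
    conjZPow x (thompsonH x y) k =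
      conjZPow x y k * conjZPow x y (k + 1) * (conjZPow x y k)⁻¹ * (conjZPow x y k)⁻¹ := by
  simp only [conjZPow, thompsonH]
  group

theorem ThompsonRelations.commute_conjZPow_thompsonH (h : ThompsonRelations x y) {k n : ℤ}
    (hkn : k < n) : Commute (conjZPow x (thompsonH x y) k) (conjZPow x y n) := by
  have h₀ := h.semiconjBy hkn
  have h₁ := h.semiconjBy (k := k) (n := n + 1) (by omega)
  have h₂ := h.semiconjBy (k := k + 1) (n := n + 1) (by omega)
  rw [conjZPow_thompsonH]
  exact ((h₀.mul_left h₂).mul_left h₁.inv_symm_left).mul_left h₀.inv_symm_left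

theorem ThompsonRelations.commute_conjZPow_thompsonH_conjZPow_thompsonH
    (h : ThompsonRelations x y) (k m : ℤ) :
    Commute (conjZPow x (thompsonH x y) k) (conjZPow x (thompsonH x y) m) := by
  wlog hkm : k < m generalizing k m
  · rcases (not_lt.1 hkm).lt_or_eq with hmk | rfl
    · exact (this m k hmk).symm
    · exact Commute.refl _
  have h₀ := h.commute_conjZPow_thompsonH hkm
  have h₁ := h.commute_conjZPow_thompsonH (k := k) (n := m + 1) (by omega)
  rw [conjZPow_thompsonH m]
  exact ((h₀.mul_right h₁).mul_right h₀.inv_right).mul_right h₀.inv_right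

end GroupRelations

theorem mk_xgen_succ (n : ℕ) :
    PresentedGroup.mk thompsonRels (xgen (n + 1)) = conjZPow xF₀ xF₁ n := by
  simp only [xgen, conjZPow, map_mul, map_zpow]
  rfl

theorem thompsonRelations_xF : ThompsonRelations xF₀ xF₁ := by
  have rel {m n : ℕ} (hr : (xgen 1)⁻¹ * xgen (m + 1) * xgen 1 * (xgen (n + 1))⁻¹ ∈ thompsonRels) :
      (conjZPow xF₀ xF₁ 0)⁻¹ * conjZPow xF₀ xF₁ m * conjZPow xF₀ xF₁ 0 = conjZPow xF₀ xF₁ n := by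
    simpa only [map_mul, map_inv, mk_xgen_succ, Nat.cast_zero] using
      PresentedGroup.mk_eq_mk_of_mul_inv_mem hr
  exact ⟨rel (.inl rfl), rel (.inr rfl)⟩

theorem thompson_conjugates_of_h_commute (i j : ℤ) :
    Commute (xF₀ ^ (-i) * hF * xF₀ ^ i) (xF₀ ^ (-j) * hF * xF₀ ^ j) :=
  thompsonRelations_xF.commute_conjZPow_thompsonH_conjZPow_thompsonH i j
end

section
/- Let G be Baumslag's metabelian group, presented as the presented group on three generators a, s, t with relators s⁻¹t⁻¹st, (t⁻¹at)⁻¹a⁻¹(t⁻¹at)a, and s⁻¹as·(a·t⁻¹at)⁻¹. Then for all integers i and j, the elements t⁻ⁱat ⁱ and t⁻ʲatʲ commute in G; that is, all relators [a^{tⁱ}, a^{tʲ}] of ℤ ≀ ℤ are consequences of the three defining relators of G. -/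
open PresentedGroup

/-- The three defining relators of Baumslag's metabelian group, on generators
`a = of 0`, `s = of 1`, `t = of 2`:  `[s,t]`, `[aᵗ,a]`, and `aˢ(a·aᵗ)⁻¹`. -/
def baumslagRels : Set (FreeGroup (Fin 3)) :=
  {(FreeGroup.of 1)⁻¹ * (FreeGroup.of 2)⁻¹ * FreeGroup.of 1 * FreeGroup.of 2,
   ((FreeGroup.of 2)⁻¹ * FreeGroup.of 0 * FreeGroup.of 2)⁻¹ * (FreeGroup.of 0)⁻¹ *
     ((FreeGroup.of 2)⁻¹ * FreeGroup.of 0 * FreeGroup.of 2) * FreeGroup.of 0,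
   (FreeGroup.of 1)⁻¹ * FreeGroup.of 0 * FreeGroup.of 1 *
     (FreeGroup.of 0 * ((FreeGroup.of 2)⁻¹ * FreeGroup.of 0 * FreeGroup.of 2))⁻¹}

/-- Baumslag's finitely presented metabelian group. -/
abbrev BaumslagG := PresentedGroup baumslagRels
/-- The generator `a` of Baumslag's group. -/
def aB : BaumslagG := PresentedGroup.of 0
/-- The generator `s` of Baumslag's group. -/
def sB : BaumslagG := PresentedGroup.of 1
/-- The generator `t` of Baumslag's group. -/
def tB : BaumslagG := PresentedGroup.of 2

lemma rel_eq_one {r : FreeGroup (Fin 3)} (h : r ∈ baumslagRels) :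
    PresentedGroup.mk baumslagRels r = 1 :=
  (QuotientGroup.eq_one_iff r).mpr (Subgroup.subset_normalClosure h)

lemma hst : Commute sB tB := by
  have h := rel_eq_one (r := (FreeGroup.of 1)⁻¹ * (FreeGroup.of 2)⁻¹ * FreeGroup.of 1 * FreeGroup.of 2) (by simp [baumslagRels])
  simp only [aB, sB, tB, PresentedGroup.of, map_mul, map_inv] at h
  have h2 := congrArg (fun x => tB * sB * x) h
  simpa [sB, tB, PresentedGroup.of, mul_assoc, Commute, SemiconjBy] using h2

lemma rel2 : Commute aB (tB⁻¹ * aB * tB) := by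
  have h := rel_eq_one (r := ((FreeGroup.of 2)⁻¹ * FreeGroup.of 0 * FreeGroup.of 2)⁻¹ * (FreeGroup.of 0)⁻¹ *
     ((FreeGroup.of 2)⁻¹ * FreeGroup.of 0 * FreeGroup.of 2) * FreeGroup.of 0) (by simp [baumslagRels])
  simp only [aB, sB, tB, PresentedGroup.of, map_mul, map_inv] at h
  have h2 := congrArg (fun x => aB * (tB⁻¹ * aB * tB) * x) h
  simpa [aB, tB, PresentedGroup.of, mul_assoc, Commute, SemiconjBy] using h2.symm

lemma rel3 : sB⁻¹ * aB * sB = aB * (tB⁻¹ * aB * tB) := by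
  have h := rel_eq_one (r := (FreeGroup.of 1)⁻¹ * FreeGroup.of 0 * FreeGroup.of 1 *
     (FreeGroup.of 0 * ((FreeGroup.of 2)⁻¹ * FreeGroup.of 0 * FreeGroup.of 2))⁻¹) (by simp [baumslagRels])
  simp only [aB, sB, tB, PresentedGroup.of, map_mul, map_inv] at h
  have := mul_inv_eq_one.mp h
  simpa [aB, sB, tB, PresentedGroup.of, mul_assoc] using this

noncomputable def A (n : ℤ) : BaumslagG := tB ^ (-n) * aB * tB ^ n

lemma A_add (i c : ℤ) : A (i + c) = (tB ^ c)⁻¹ * A i * tB ^ c := by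
  simp only [A, neg_add, zpow_add]
  group

lemma shiftC (c : ℤ) {i j : ℤ} (h : Commute (A i) (A j)) :
    Commute (A (i + c)) (A (j + c)) := by
  rw [A_add i c, A_add j c]
  have key : ∀ x y : BaumslagG, ((tB ^ c)⁻¹ * x * tB ^ c) * ((tB ^ c)⁻¹ * y * tB ^ c)
      = (tB ^ c)⁻¹ * (x * y) * tB ^ c := by intro x y; group
  show _ = _
  rw [key, key, h.eq]

lemma sconj (n : ℤ) : sB⁻¹ * A n * sB = A n * A (n + 1) := by
  have c1 : sB⁻¹ * tB ^ (-n) = tB ^ (-n) * sB⁻¹ := ((hst.zpow_right (-n)).inv_left).eq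
  have c2 : tB ^ n * sB = sB * tB ^ n := (hst.zpow_right n).eq.symm
  calc sB⁻¹ * A n * sB = sB⁻¹ * tB ^ (-n) * aB * (tB ^ n * sB) := by
        simp only [A]; group
    _ = tB ^ (-n) * sB⁻¹ * aB * (sB * tB ^ n) := by rw [c1, c2]
    _ = tB ^ (-n) * (sB⁻¹ * aB * sB) * tB ^ n := by group
    _ = tB ^ (-n) * (aB * (tB⁻¹ * aB * tB)) * tB ^ n := by rw [rel3]
    _ = A n * A (n + 1) := by simp only [A, neg_add, zpow_add]; group

lemma step {x y u v : BaumslagG} (hs : Commute (x * y) (u * v))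
    (k0 : Commute x u) (k1 : Commute y u) (k2 : Commute y v) : Commute x v := by
  have hyuv : Commute y (u * v) := k1.mul_right k2
  have hxuv : Commute x (u * v) := by
    have h := hs.mul_left hyuv.inv_left
    simpa [mul_inv_cancel_right] using h
  have h2 := (k0.inv_right).mul_right hxuv
  simpa [inv_mul_cancel_left] using h2

lemma A_zero : A 0 = aB := by simp [A]

lemma A_one : A 1 = tB⁻¹ * aB * tB := by
  simp [A, zpow_neg, zpow_one]

lemma natKey : ∀ n : ℕ, Commute (A 0) (A n) ∧ Commute (A 0) (A (n + 1)) := by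
  intro n
  induction n with
  | zero =>
    simp only [Nat.cast_zero, zero_add]
    refine ⟨Commute.refl _, ?_⟩
    rw [A_zero, A_one]; exact rel2
  | succ n ih =>
    obtain ⟨h0, h1⟩ := ih
    push_cast
    have h1' : Commute (A 0) (A ((n:ℤ) + 1)) := h1
    have h0' : Commute (A 0) (A (n:ℤ)) := h0
    refine ⟨h1', ?_⟩
    have hs : Commute (A 0 * A 1) (A ((n:ℤ) + 1) * A ((n:ℤ) + 1 + 1)) := by
      have hcon : Commute (sB⁻¹ * A 0 * sB) (sB⁻¹ * A ((n:ℤ) + 1) * sB) := by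
        have key : ∀ x y : BaumslagG, (sB⁻¹ * x * sB) * (sB⁻¹ * y * sB)
            = sB⁻¹ * (x * y) * sB := by intro x y; group
        show _ = _
        rw [key, key, h1'.eq]
      rw [sconj, sconj, zero_add] at hcon
      exact hcon
    have k1 : Commute (A 1) (A ((n:ℤ) + 1)) := by
      have := shiftC 1 h0'
      rwa [zero_add] at this
    have k2 : Commute (A 1) (A ((n:ℤ) + 1 + 1)) := by
      have := shiftC 1 h1'
      rwa [zero_add] at this
    exact step hs h1' k1 k2

lemma intKey : ∀ m : ℤ, Commute (A 0) (A m) := by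
  intro m
  rcases le_or_gt 0 m with h | h
  · obtain ⟨n, rfl⟩ := Int.eq_ofNat_of_zero_le h
    exact (natKey n).1
  · have h0 : Commute (A 0) (A (-m)) := by
      obtain ⟨n, hn⟩ := Int.eq_ofNat_of_zero_le (by omega : (0:ℤ) ≤ -m)
      rw [hn]; exact (natKey n).1
    have := shiftC m h0
    simpa using this.symm

theorem baumslag_conjugates_of_a_commute (i j : ℤ) :
    Commute (tB ^ (-i) * aB * tB ^ i) (tB ^ (-j) * aB * tB ^ j) := by
  have h := shiftC i (intKey (j - i))
  simpa [A] using h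
end

section
/- Let G be Baumslag's metabelian group, presented as the presented group on three generators a, s, t with relators s⁻¹t⁻¹st, (t⁻¹at)⁻¹a⁻¹(t⁻¹at)a, and s⁻¹as·(a·t⁻¹at)⁻¹. Writing aᵢ := t⁻ⁱatⁱ, for every natural number n one has s⁻ⁿasⁿ = ∏_{i=0}^{n} aᵢ^{C(n,i)} in G, where C(n,i) is the binomial coefficient and the product is taken in increasing order of i. -/
/-
Conjugations by `s⁻¹` and `t⁻¹` are commuting automorphisms `φ`, `ψ` of `G` with `φ a = a * ψ a`,
and `aᵢ = ψⁱ a`. The relator `[aᵗ, a]` says that `aᵢ` commutes with `aᵢ₊₁`; applying `φ` to the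
relation `[aᵢ, aᵢ₊ₖ₊₁] = 1` and cancelling turns commutation at gaps `k`, `k + 1` into commutation
at gap `k + 2`, so all `aᵢ` commute. On the abelian group they generate `φ` acts as `1 + ψ`, and
`φⁿ a = ∏ aᵢ ^ C(n, i)` is the binomial theorem, i.e. Pascal's rule at each step.
-/

theorem Commute.of_mul_of_mul {G : Type*} [Group G] {x y z w : G} (hxz : Commute x z)
    (hyz : Commute y z) (hyw : Commute y w) (h : Commute (x * y) (z * w)) : Commute x w := by
  have hxzw : x * z * w * y = z * w * x * y := by
    calc x * z * w * y = x * y * (z * w) := by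
          rw [mul_assoc x y, hyz.left_comm, hyw.eq]; simp only [mul_assoc]
      _ = z * w * (x * y) := h.eq
      _ = z * w * x * y := by simp only [mul_assoc]
  have hzxw : z * (x * w) = z * (w * x) := by
    rw [← mul_assoc, ← hxz.eq, ← mul_assoc z w, mul_right_cancel hxzw]
  exact mul_left_cancel hzxw

theorem Finset.prod_range_mul_succ_pow_choose {M : Type*} [CommMonoid M] (x : ℕ → M) (n : ℕ) :
    ∏ i ∈ range (n + 1), (x i * x (i + 1)) ^ n.choose i =
      ∏ i ∈ range (n + 2), x i ^ (n + 1).choose i := by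
  rw [prod_pow_choose_succ (fun i _ => x i), ← prod_mul_distrib]
  simp only [mul_pow]

open scoped IsMulCommutative in
theorem List.prod_range_mul_succ_pow_choose {M : Type*} [Monoid M] {x : ℕ → M}
    (hx : ∀ i j, Commute (x i) (x j)) (n : ℕ) :
    ((range (n + 1)).map fun i => (x i * x (i + 1)) ^ n.choose i).prod =
      ((range (n + 2)).map fun i => x i ^ (n + 1).choose i).prod := by
  let S := Submonoid.closure (Set.range x)
  have : IsMulCommutative S := Submonoid.isMulCommutative_closure _ <| by
    rintro _ ⟨i, rfl⟩ _ ⟨j, rfl⟩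
    exact (hx i j).eq
  let y (i : ℕ) : S := ⟨x i, Submonoid.subset_closure ⟨i, rfl⟩⟩
  have := congrArg S.subtype (Finset.prod_range_mul_succ_pow_choose y n)
  simpa [Finset.prod_eq_multiset_prod, Multiset.range, map_list_prod, Function.comp_def, y]
    using this

section IteratedEndomorphism

variable {G F : Type*} [Group G] [FunLike F G G] [MonoidHomClass F G G] {φ ψ : F} {x : ℕ → G}
  {a : G}

theorem commute_of_map_eq_mul_succ (hφ : ∀ i, φ (x i) = x i * x (i + 1))
    (hx : ∀ i, Commute (x i) (x (i + 1))) (i j : ℕ) : Commute (x i) (x j) := by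
  suffices h : ∀ k i, Commute (x i) (x (i + k)) by
    rcases Nat.le_total i j with hij | hji
    · obtain ⟨k, rfl⟩ := Nat.exists_eq_add_of_le hij
      exact h k i
    · obtain ⟨k, rfl⟩ := Nat.exists_eq_add_of_le hji
      exact (h k j).symm
  intro k
  induction k using Nat.twoStepInduction with
  | zero => exact fun i => Commute.refl _
  | one => exact hx
  | more k ih₀ ih₁ =>
    intro i
    have hyz : Commute (x (i + 1)) (x (i + (k + 1))) := by convert ih₀ (i + 1) using 2; omega
    have hyw : Commute (x (i + 1)) (x (i + (k + 2))) := by convert ih₁ (i + 1) using 2; omega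
    have hφ_comm := (ih₁ i).map φ
    rw [hφ, hφ] at hφ_comm
    exact .of_mul_of_mul (ih₁ i) hyz hyw hφ_comm

theorem iterate_map_eq_prod_pow_choose (hφ : ∀ i, φ (x i) = x i * x (i + 1))
    (hx : ∀ i, Commute (x i) (x (i + 1))) (n : ℕ) :
    (⇑φ)^[n] (x 0) = ((List.range (n + 1)).map fun i => x i ^ n.choose i).prod := by
  induction n with
  | zero => simp
  | succ n ih =>
    rw [Function.iterate_succ_apply', ih, map_list_prod, List.map_map,
      ← List.prod_range_mul_succ_pow_choose (commute_of_map_eq_mul_succ hφ hx)]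
    simp only [Function.comp_def, map_pow, hφ]

theorem map_iterate_eq_mul_iterate_succ (hφψ : Function.Commute φ ψ) (hφ : φ a = a * ψ a)
    (i : ℕ) : φ ((⇑ψ)^[i] a) = (⇑ψ)^[i] a * (⇑ψ)^[i + 1] a := by
  rw [(hφψ.iterate_right i).eq, hφ, iterate_map_mul, Function.iterate_succ_apply]

theorem commute_iterate_iterate_succ (ha : Commute a (ψ a)) (i : ℕ) :
    Commute ((⇑ψ)^[i] a) ((⇑ψ)^[i + 1] a) := by
  induction i with
  | zero => exact ha
  | succ i ih =>
    simpa only [Function.iterate_succ_apply'] using ih.map ψ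

theorem iterate_eq_prod_iterate_pow_choose (hφψ : Function.Commute φ ψ) (hφ : φ a = a * ψ a)
    (ha : Commute a (ψ a)) (n : ℕ) :
    (⇑φ)^[n] a = ((List.range (n + 1)).map fun i => ((⇑ψ)^[i] a) ^ n.choose i).prod :=
  iterate_map_eq_prod_pow_choose (x := fun i => (⇑ψ)^[i] a)
    (map_iterate_eq_mul_iterate_succ hφψ hφ) (commute_iterate_iterate_succ ha) n

end IteratedEndomorphism

theorem MulAut.iterate_conj_inv_apply {G : Type*} [Group G] (g x : G) (n : ℕ) :
    (⇑(MulAut.conj g⁻¹))^[n] x = (g ^ n)⁻¹ * x * g ^ n := by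
  induction n with
  | zero => simp
  | succ n ih =>
    rw [Function.iterate_succ_apply', ih, MulAut.conj_apply, pow_succ]
    group

theorem MulAut.function_commute_conj {G : Type*} [Group G] {g h : G} (hgh : Commute g h) :
    Function.Commute (MulAut.conj g) (MulAut.conj h) := fun x => by
  simp only [← MulAut.mul_apply, ← map_mul, hgh.eq]

namespace BaumslagG

-- Each relator maps definitionally to the corresponding relation: double inverses of concrete
-- words reduce by computation.
theorem commute_sB_inv_tB_inv : Commute sB⁻¹ tB⁻¹ := by
  have h := PresentedGroup.one_of_mem (Set.mem_insert _ _ : _ ∈ baumslagRels)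
  exact commutatorElement_eq_one_iff_commute.mp h

theorem commute_aB_conj_tB : Commute aB (tB⁻¹ * aB * tB) := by
  have h := PresentedGroup.one_of_mem
    (Set.mem_insert_of_mem _ (Set.mem_insert _ _) : _ ∈ baumslagRels)
  exact (Commute.inv_inv_iff.mp (commutatorElement_eq_one_iff_commute.mp h)).symm

theorem inv_sB_mul_aB_mul_sB : sB⁻¹ * aB * sB = aB * (tB⁻¹ * aB * tB) := by
  have h := PresentedGroup.one_of_mem
    (Set.mem_insert_of_mem _ (Set.mem_insert_of_mem _ rfl) : _ ∈ baumslagRels)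
  exact mul_inv_eq_one.mp h

end BaumslagG

theorem baumslag_s_power_conj (n : ℕ) :
    (sB ^ n)⁻¹ * aB * sB ^ n =
      ((List.range (n + 1)).map fun (i : ℕ) =>
        (tB ^ (-(i : ℤ)) * aB * tB ^ (i : ℤ)) ^ (n.choose i)).prod := by
  have h := iterate_eq_prod_iterate_pow_choose
    (MulAut.function_commute_conj BaumslagG.commute_sB_inv_tB_inv)
    (by simpa only [MulAut.conj_apply, inv_inv] using BaumslagG.inv_sB_mul_aB_mul_sB)
    (by simpa only [MulAut.conj_apply, inv_inv] using BaumslagG.commute_aB_conj_tB) n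
  simpa only [MulAut.iterate_conj_inv_apply, zpow_neg, zpow_natCast] using h
end
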